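/- For every p ∈ (0,1), the quantity (1/2)·(h_B(p) + (1−p)^4 · ln 2) is a lower bound for the topological entropy of the hard core shift on Z², where h_B(p) = −p ln p − (1−p) ln(1−p). -/

import Mathlib

/-!
Colour the box like a chessboard. Once the even sites are filled arbitrarily, every odd site
whose (at most four) neighbours all carry `0` can be filled freely, so `N_n ≥ ∑_σ 2 ^ F(σ)`,
where `σ` runs over the fillings of the even sites and `F(σ)` counts the free odd sites.
By Gibbs' inequality, `log ∑_σ 2 ^ F(σ) ≥ H(μ) + 𝔼_μ[F] · log 2` for every probability `μ`
on the fillings `σ`. For the i.i.d. Bernoulli(`p`) filling, `H(μ) = (n² / 2) · h_B(p)` and each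
odd site is free with probability at least `(1 - p) ^ 4`. Divide by `n²` and let `n → ∞`
through even values.
-/

/-- A configuration on an `n × n` box of ℤ² is admissible for the hard core
rule if no two nearest-neighbor sites both carry a `1`. -/
def HCAdmissible2 {n : ℕ} (x : Fin n → Fin n → Bool) : Prop :=
  ∀ i j i' j' : Fin n,
    (((i : ℕ) = (i' : ℕ) ∧ (j : ℕ) + 1 = (j' : ℕ)) ∨
     ((i : ℕ) + 1 = (i' : ℕ) ∧ (j : ℕ) = (j' : ℕ))) →
    ¬(x i j = true ∧ x i' j' = true)

/-- The binary entropy function. -/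
noncomputable def hB (p : ℝ) : ℝ := -p * Real.log p - (1 - p) * Real.log (1 - p)

open Finset Real

section Gibbs

variable {ι : Type*} [Fintype ι]

theorem sum_mul_sub_log_le_log_sum_exp {w : ι → ℝ} (g : ι → ℝ) (hw : ∀ i, 0 ≤ w i)
    (hw1 : ∑ i, w i = 1) : ∑ i, w i * (g i - log (w i)) ≤ log (∑ i, exp (g i)) := by
  have : Nonempty ι := by
    by_contra h
    simp [not_nonempty_iff.mp h] at hw1
  rw [le_log_iff_exp_le (sum_pos (fun i _ => exp_pos (g i)) univ_nonempty)]
  calc exp (∑ i, w i * (g i - log (w i)))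
      ≤ ∑ i, w i * exp (g i - log (w i)) := by
        simpa only [smul_eq_mul] using
          convexOn_exp.map_sum_le (fun i _ => hw i) hw1 (fun i _ => Set.mem_univ _)
    _ ≤ ∑ i, exp (g i) := sum_le_sum fun i _ => ?_
  rcases (hw i).eq_or_lt with h | h
  · rw [← h, zero_mul]; positivity
  · rw [exp_sub, exp_log h, mul_div_cancel₀ _ h.ne']

end Gibbs

section Bernoulli

variable {ι : Type*} [Fintype ι] [DecidableEq ι] (p : ℝ)

noncomputable def bernoulliWeight (σ : ι → Bool) : ℝ := ∏ i, if σ i then p else 1 - p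

theorem sum_bernoulliWeight_mul_prod (g : ι → Bool → ℝ) :
    ∑ σ, bernoulliWeight p σ * ∏ i, g i (σ i) = ∏ i, (p * g i true + (1 - p) * g i false) := by
  simp_rw [bernoulliWeight, ← prod_mul_distrib]
  rw [← Fintype.prod_sum fun i b => (if b then p else 1 - p) * g i b]
  simp

omit [DecidableEq ι] in
theorem bernoulliWeight_nonneg (hp0 : 0 ≤ p) (hp1 : p ≤ 1) (σ : ι → Bool) :
    0 ≤ bernoulliWeight p σ :=
  prod_nonneg fun i _ => by split <;> linarith

theorem sum_bernoulliWeight : ∑ σ : ι → Bool, bernoulliWeight p σ = 1 := by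
  simpa using sum_bernoulliWeight_mul_prod p fun _ _ => 1

theorem sum_bernoulliWeight_mul_apply (j : ι) (φ : Bool → ℝ) :
    ∑ σ, bernoulliWeight p σ * φ (σ j) = p * φ true + (1 - p) * φ false := by
  convert sum_bernoulliWeight_mul_prod p (fun i b => if i = j then φ b else 1) using 1
  · simp only [Fintype.prod_ite_eq']
  · rw [← Fintype.prod_ite_eq' j fun _ => p * φ true + (1 - p) * φ false]
    congr with i
    split_ifs <;> ring

theorem sum_bernoulliWeight_mul_indicator (J : Finset ι) :
    ∑ σ, bernoulliWeight p σ * (if ∀ i ∈ J, σ i = false then 1 else 0) = (1 - p) ^ #J := by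
  convert sum_bernoulliWeight_mul_prod p (fun i b => if i ∈ J → b = false then 1 else 0) using 1
  · simp [prod_boole]
  · rw [← prod_const, ← Fintype.prod_ite_mem]
    congr with i
    split_ifs <;> simp_all

theorem sum_bernoulliWeight_mul_log (hp0 : p ≠ 0) (hp1 : p ≠ 1) :
    ∑ σ : ι → Bool, bernoulliWeight p σ * log (bernoulliWeight p σ) =
      -(Fintype.card ι * hB p) := by
  have hlog (σ : ι → Bool) :
      log (bernoulliWeight p σ) = ∑ i, log (if σ i then p else 1 - p) :=
    log_prod fun i _ => by split <;> [exact hp0; exact sub_ne_zero.2 hp1.symm]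
  simp_rw [hlog, mul_sum]
  rw [sum_comm]
  simp_rw [sum_bernoulliWeight_mul_apply p _ fun b => log (if b then p else 1 - p)]
  simp only [↓reduceIte, Bool.false_eq_true, sum_const, card_univ, smul_add, nsmul_eq_mul, hB,
    neg_mul]
  ring

theorem card_mul_hB_add_le_log_sum_two_pow (hp0 : 0 < p) (hp1 : p < 1) (f : (ι → Bool) → ℕ) :
    Fintype.card ι * hB p + log 2 * ∑ σ, bernoulliWeight p σ * f σ ≤
      log (∑ σ, (2 : ℝ) ^ f σ) := by
  have hmean : ∑ σ, bernoulliWeight p σ * (f σ * log 2) =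
      log 2 * ∑ σ, bernoulliWeight p σ * f σ := by
    rw [mul_sum]
    exact sum_congr rfl fun σ _ => by ring
  have hexp (σ : ι → Bool) : exp (f σ * log 2) = 2 ^ f σ := by
    rw [← log_pow, exp_log (by positivity)]
  calc Fintype.card ι * hB p + log 2 * ∑ σ, bernoulliWeight p σ * f σ
      = ∑ σ, bernoulliWeight p σ * (f σ * log 2 - log (bernoulliWeight p σ)) := by
        simp only [mul_sub, sum_sub_distrib, hmean, sum_bernoulliWeight_mul_log p hp0.ne' hp1.ne]
        ring
    _ ≤ log (∑ σ, exp (f σ * log 2)) :=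
        sum_mul_sub_log_le_log_sum_exp _ (bernoulliWeight_nonneg p hp0.le hp1.le)
          (sum_bernoulliWeight p)
    _ = log (∑ σ, (2 : ℝ) ^ f σ) := by simp_rw [hexp]

end Bernoulli

namespace SimpleGraph

section Bipartite

variable {V : Type*} [Fintype V] [DecidableEq V] (G : SimpleGraph V) [DecidableRel G.Adj]
  (P : V → Prop) [DecidablePred P]

def freeSites (σ : {v // P v} → Bool) : Finset {v // ¬ P v} :=
  {o | ∀ e : {v // P v}, G.Adj o e → σ e = false}

def extendConfig (σ : {v // P v} → Bool) (τ : freeSites G P σ → Bool) (v : V) : Bool :=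
  if h : P v then σ ⟨v, h⟩ else if hf : ⟨v, h⟩ ∈ freeSites G P σ then τ ⟨_, hf⟩ else false

variable {G P}

theorem isIndepSet_extendConfig (hP : ∀ ⦃u v⦄, G.Adj u v → (P u ↔ ¬ P v))
    (σ : {v // P v} → Bool) (τ : freeSites G P σ → Bool) :
    G.IsIndepSet {v | extendConfig G P σ τ v = true} := by
  have key (u v : V) (hu : P u) (huv : G.Adj u v) (hxu : extendConfig G P σ τ u = true)
      (hxv : extendConfig G P σ τ v = true) : False := by
    have hv : ¬ P v := (hP huv).1 hu
    simp only [extendConfig, hu, hv, dif_pos, dif_neg, not_false_eq_true] at hxu hxv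
    split_ifs at hxv with hfree
    have := (mem_filter.1 hfree).2 ⟨u, hu⟩ huv.symm
    simp_all
  intro u hu v hv _ huv
  by_cases h : P u
  · exact key u v h huv hu hv
  · exact key v u ((hP huv.symm).2 h) huv.symm hv hu

theorem extendConfig_injective :
    Function.Injective fun st : Σ σ, (freeSites G P σ → Bool) => extendConfig G P st.1 st.2 := by
  rintro ⟨σ, τ⟩ ⟨σ', τ'⟩ h
  obtain rfl : σ = σ' := funext fun e => by simpa [extendConfig, e.2] using congrFun h e
  obtain rfl : τ = τ' := funext fun o => by simpa [extendConfig, o.1.2, o.2] using congrFun h o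
  rfl

theorem sum_two_pow_card_freeSites_le (hP : ∀ ⦃u v⦄, G.Adj u v → (P u ↔ ¬ P v)) :
    ∑ σ, 2 ^ #(freeSites G P σ) ≤ Nat.card {x : V → Bool // G.IsIndepSet {v | x v = true}} :=
  calc ∑ σ, 2 ^ #(freeSites G P σ) = Nat.card (Σ σ, (freeSites G P σ → Bool)) := by
        simp [Nat.card_eq_fintype_card, Fintype.card_sigma]
    _ ≤ _ := Nat.card_le_card_of_injective
        (fun st => ⟨extendConfig G P st.1 st.2, isIndepSet_extendConfig hP st.1 st.2⟩)
        fun _ _ h => extendConfig_injective (congrArg Subtype.val h)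

theorem card_mul_pow_le_sum_bernoulliWeight_mul_card_freeSites {d : ℕ}
    (hd : ∀ v, ¬ P v → G.degree v ≤ d) {p : ℝ} (hp0 : 0 ≤ p) (hp1 : p ≤ 1) :
    Fintype.card {v // ¬ P v} * (1 - p) ^ d ≤
      ∑ σ, bernoulliWeight p σ * #(freeSites G P σ) := by
  have hfree (σ : {v // P v} → Bool) : (#(freeSites G P σ) : ℝ) =
      ∑ o : {v // ¬ P v}, if ∀ e ∈ (G.neighborFinset o).subtype P, σ e = false then 1 else 0 := by
    rw [freeSites, natCast_card_filter]
    simp only [mem_subtype, mem_neighborFinset]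
  calc Fintype.card {v // ¬ P v} * (1 - p) ^ d = ∑ _o : {v // ¬ P v}, (1 - p) ^ d := by simp
    _ ≤ ∑ o : {v // ¬ P v}, (1 - p) ^ #((G.neighborFinset o).subtype P) :=
        sum_le_sum fun o _ => pow_le_pow_of_le_one (by linarith) (by linarith)
          (((card_subtype P _).trans_le (card_filter_le _ _)).trans (hd o o.2))
    _ = ∑ σ, bernoulliWeight p σ * #(freeSites G P σ) := by
        simp_rw [← sum_bernoulliWeight_mul_indicator, hfree, mul_sum]
        rw [sum_comm]

theorem card_mul_hB_add_le_log_card_isIndepSet (hP : ∀ ⦃u v⦄, G.Adj u v → (P u ↔ ¬ P v))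
    {d : ℕ} (hd : ∀ v, ¬ P v → G.degree v ≤ d) {p : ℝ} (hp0 : 0 < p) (hp1 : p < 1) :
    Fintype.card {v // P v} * hB p + Fintype.card {v // ¬ P v} * (1 - p) ^ d * log 2 ≤
      log (Nat.card {x : V → Bool // G.IsIndepSet {v | x v = true}}) :=
  calc _ ≤ Fintype.card {v // P v} * hB p +
        log 2 * ∑ σ, bernoulliWeight p σ * #(freeSites G P σ) := by
        rw [mul_comm _ (log 2)]
        gcongr
        exact card_mul_pow_le_sum_bernoulliWeight_mul_card_freeSites hd hp0.le hp1.le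
    _ ≤ log (∑ σ, (2 : ℝ) ^ #(freeSites G P σ)) := card_mul_hB_add_le_log_sum_two_pow p hp0 hp1 _
    _ ≤ _ := log_le_log (sum_pos (fun _ _ => by positivity) univ_nonempty)
        (by exact_mod_cast sum_two_pow_card_freeSites_le hP)

end Bipartite

section Grid

variable {n : ℕ}

def gridGraph (n : ℕ) : SimpleGraph (Fin n × Fin n) := pathGraph n □ pathGraph n

theorem gridGraph_adj {u v : Fin n × Fin n} :
    (gridGraph n).Adj u v ↔
      ((u.1 : ℕ) + 1 = v.1 ∨ (v.1 : ℕ) + 1 = u.1) ∧ u.2 = v.2 ∨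
        ((u.2 : ℕ) + 1 = v.2 ∨ (v.2 : ℕ) + 1 = u.2) ∧ u.1 = v.1 := by
  rw [gridGraph, boxProd_adj, pathGraph_adj, pathGraph_adj]

theorem degree_pathGraph_le (u : Fin n) [Fintype ((pathGraph n).neighborSet u)] :
    (pathGraph n).degree u ≤ 2 :=
  calc (pathGraph n).degree u ≤ #({(u : ℕ) + 1, (u : ℕ) - 1} : Finset ℕ) :=
        card_le_card_of_injOn Fin.val (fun v hv => by
          rw [mem_coe, mem_neighborFinset, pathGraph_adj] at hv
          simp only [coe_insert, coe_singleton, Set.mem_insert_iff, Set.mem_singleton_iff]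
          omega) Fin.val_injective.injOn
    _ ≤ 2 := card_le_two

theorem degree_gridGraph_le (v : Fin n × Fin n) [Fintype ((gridGraph n).neighborSet v)] :
    (gridGraph n).degree v ≤ 4 := by
  classical
  calc (gridGraph n).degree v = (pathGraph n).degree v.1 + (pathGraph n).degree v.2 := by
        convert degree_boxProd (G := pathGraph n) (H := pathGraph n) v
        rfl
    _ ≤ 4 := by linarith [degree_pathGraph_le v.1, degree_pathGraph_le v.2]

theorem even_iff_not_even_of_gridGraph_adj {u v : Fin n × Fin n} (h : (gridGraph n).Adj u v) :
    Even ((u.1 : ℕ) + u.2) ↔ ¬ Even ((v.1 : ℕ) + v.2) := by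
  obtain ⟨⟨a, b⟩, ⟨c, d⟩⟩ := (u, v)
  rw [gridGraph_adj] at h
  simp only [Nat.even_iff, Fin.ext_iff] at h ⊢
  omega

end Grid

end SimpleGraph

open SimpleGraph

section HardCoreGrid

variable {n : ℕ}

theorem hcAdmissible2_iff_isIndepSet (x : Fin n → Fin n → Bool) :
    HCAdmissible2 x ↔ (gridGraph n).IsIndepSet {v | x v.1 v.2 = true} := by
  constructor
  · rintro hx ⟨a, b⟩ hu ⟨c, d⟩ hv - huv
    rw [gridGraph_adj] at huv
    rcases huv with ⟨h | h, rfl⟩ | ⟨h | h, rfl⟩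
    · exact hx a b c b (Or.inr ⟨h, rfl⟩) ⟨hu, hv⟩
    · exact hx c b a b (Or.inr ⟨h, rfl⟩) ⟨hv, hu⟩
    · exact hx a b a d (Or.inl ⟨rfl, h⟩) ⟨hu, hv⟩
    · exact hx a d a b (Or.inl ⟨rfl, h⟩) ⟨hv, hu⟩
  · rintro hx i j i' j' hadj ⟨h, h'⟩
    refine @hx (i, j) h (i', j') h' (fun heq => ?_) (gridGraph_adj.2 ?_)
    · simp only [Prod.ext_iff, Fin.ext_iff] at heq
      omega
    · simp only [Fin.ext_iff]
      omega

theorem natCard_hcAdmissible2 :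
    Nat.card {x : Fin n → Fin n → Bool // HCAdmissible2 x} =
      Nat.card {x : Fin n × Fin n → Bool // (gridGraph n).IsIndepSet {v | x v = true}} :=
  Nat.card_congr ((Equiv.curry _ _ _).symm.subtypeEquiv hcAdmissible2_iff_isIndepSet)

theorem card_even_eq_card_not_even (hn : Even n) :
    Fintype.card {v : Fin n × Fin n // Even ((v.1 : ℕ) + v.2)} =
      Fintype.card {v : Fin n × Fin n // ¬ Even ((v.1 : ℕ) + v.2)} :=
  Fintype.card_congr <| ((Equiv.refl _).prodCongr Fin.revPerm).subtypeEquiv fun v => by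
    have := v.2.isLt
    simp only [Equiv.prodCongr_apply, Prod.map, Equiv.refl_apply, Fin.revPerm_apply, Fin.val_rev,
      Nat.even_iff] at hn ⊢
    omega

theorem two_mul_card_even_sites (hn : Even n) :
    2 * Fintype.card {v : Fin n × Fin n // Even ((v.1 : ℕ) + v.2)} = n ^ 2 := by
  have hcompl := Fintype.card_subtype_compl fun v : Fin n × Fin n => Even ((v.1 : ℕ) + v.2)
  have hle := Fintype.card_subtype_le fun v : Fin n × Fin n => Even ((v.1 : ℕ) + v.2)
  rw [← card_even_eq_card_not_even hn, Fintype.card_prod, Fintype.card_fin] at hcompl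
  rw [Fintype.card_prod, Fintype.card_fin] at hle
  rw [sq]
  omega

theorem half_hB_add_le_log_card_hcAdmissible2_div_sq (hn : Even n) (hn0 : n ≠ 0) {p : ℝ}
    (hp0 : 0 < p) (hp1 : p < 1) :
    (1 / 2) * (hB p + (1 - p) ^ 4 * log 2) ≤
      (1 / (n : ℝ) ^ 2) * log (Nat.card {x : Fin n → Fin n → Bool // HCAdmissible2 x}) := by
  classical
  have hbound := card_mul_hB_add_le_log_card_isIndepSet (G := gridGraph n)
    (fun _ _ => even_iff_not_even_of_gridGraph_adj) (fun v _ => degree_gridGraph_le v) hp0 hp1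
  have hE : (Fintype.card {v : Fin n × Fin n // Even ((v.1 : ℕ) + v.2)} : ℝ) = n ^ 2 / 2 := by
    have := two_mul_card_even_sites hn
    rify at this
    linarith
  rw [← card_even_eq_card_not_even hn, hE, ← natCard_hcAdmissible2] at hbound
  calc (1 / 2) * (hB p + (1 - p) ^ 4 * log 2)
      = (1 / (n : ℝ) ^ 2) * ((n : ℝ) ^ 2 / 2 * hB p + (n : ℝ) ^ 2 / 2 * (1 - p) ^ 4 * log 2) := by
        field_simp
    _ ≤ _ := by gcongr

end HardCoreGrid

theorem hard_core_entropy_Z2_lower_bound (h : ℝ)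
    (hh : Filter.Tendsto
      (fun n : ℕ =>
        (1 / (n : ℝ) ^ 2) *
          Real.log (Nat.card {x : Fin n → Fin n → Bool // HCAdmissible2 x}))
      Filter.atTop (nhds h)) :
    ∀ p ∈ Set.Ioo (0 : ℝ) 1, (1 / 2) * (hB p + (1 - p) ^ 4 * Real.log 2) ≤ h := by
  rintro p ⟨hp0, hp1⟩
  have hdouble : Filter.Tendsto (fun m : ℕ => 2 * m) Filter.atTop Filter.atTop :=
    Filter.tendsto_atTop_atTop_of_monotone (fun _ _ h => by omega) fun m => ⟨m, by omega⟩
  refine ge_of_tendsto (hh.comp hdouble) (Filter.eventually_atTop.2 ⟨1, fun m hm => ?_⟩)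
  exact half_hB_add_le_log_card_hcAdmissible2_div_sq (even_two_mul m) (by omega) hp0 hp1
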